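/- Let $d = 2k$ and suppose $\Delta \in \mathbb{Z}$ satisfies $\Delta \equiv \det A \pmod 8$, where $A = B + 4C + 4C^T$ with $C$ upper triangular over $\mathbb{Z}$ and $B$ a block diagonal sum of blocks $\begin{pmatrix} 4a_i & 1 \\ 1 & 1 + 4b_i \end{pmatrix}$ with $a_i, b_i \in \mathbb{Z}$. Then $\Delta \equiv \pm 1 \pmod 8$ if $\sum_{i=1}^k a_i$ is even, and $\Delta \equiv \pm 3 \pmod 8$ if $\sum_{i=1}^k a_i$ is odd. -/

import Mathlib

open Matrix

/-! Modulo 8 the matrix `B` is symmetric with odd, hence invertible, determinant, so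
`det (B + 4 (C + Cᵀ)) = det B * det (1 + 4 B⁻¹ (C + Cᵀ)) = det B * (1 + 4 tr (B⁻¹ (C + Cᵀ)))`
since `16 = 0`. As `B⁻¹` is symmetric, `tr (B⁻¹ Cᵀ) = tr (B⁻¹ C)`, so the correction term is
`8 tr (B⁻¹ C) = 0` and `det A ≡ det B`. Finally
`det B = ∏ (4 aᵢ (1 + 4 bᵢ) - 1) ≡ ∏ (4 aᵢ - 1) ≡ (-1)ᵏ (1 - 4 ∑ aᵢ) (mod 8)`. -/

theorem Matrix.det_add_smul_add_transpose {R n : Type*} [CommRing R] [Fintype n] [DecidableEq n]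
    {B : Matrix n n R} (hB : B.IsSymm) (hdet : IsUnit B.det) (C : Matrix n n R) {r : R}
    (hr2 : 2 * r = 0) (hrr : r ^ 2 = 0) :
    (B + r • (C + Cᵀ)).det = B.det := by
  have hfactor : B + r • (C + Cᵀ) = B * (1 + r • (B⁻¹ * (C + Cᵀ))) := by
    rw [Matrix.mul_add, Matrix.mul_one, Matrix.mul_smul, mul_nonsing_inv_cancel_left _ _ hdet]
  have htrace : trace (B⁻¹ * (C + Cᵀ)) = 2 * trace (B⁻¹ * C) := by
    rw [Matrix.mul_add, trace_add, ← trace_transpose (B⁻¹ * Cᵀ), transpose_mul,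
      transpose_transpose, hB.inv.eq, trace_mul_comm, two_mul]
  rw [hfactor, det_mul, det_one_add_smul, htrace, hrr]
  linear_combination B.det * trace (B⁻¹ * C) * hr2

theorem Int.isUnit_cast_zmod_eight_of_odd {n : ℤ} (hn : Odd n) : IsUnit (n : ZMod 8) := by
  obtain ⟨m, rfl⟩ := hn
  have h2 : IsCoprime (2 : ℤ) (2 * m + 1) := ⟨-m, 1, by ring⟩
  rw [ZMod.coe_int_isUnit_iff_isCoprime]
  simpa using h2.pow_left (m := 3)

theorem Int.det_add_four_smul_add_transpose_modEq_eight {n : Type*} [Fintype n] [DecidableEq n]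
    {B : Matrix n n ℤ} (hB : B.IsSymm) (hodd : Odd B.det) (C : Matrix n n ℤ) :
    (B + (4 : ℤ) • C + (4 : ℤ) • Cᵀ).det ≡ B.det [ZMOD 8] := by
  refine (ZMod.intCast_eq_intCast_iff _ _ 8).mp ?_
  set φ : ℤ → ZMod 8 := fun x => x
  have hmap : (B + (4 : ℤ) • C + (4 : ℤ) • Cᵀ).map φ =
      B.map φ + (4 : ZMod 8) • (C.map φ + (C.map φ)ᵀ) := by
    ext i j
    simp only [φ, map_apply, Matrix.add_apply, Matrix.smul_apply, transpose_apply, smul_eq_mul]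
    push_cast
    ring
  have hunit : IsUnit (B.map φ).det := by
    simpa [φ, Int.cast_det] using Int.isUnit_cast_zmod_eight_of_odd hodd
  rw [Int.cast_det, Int.cast_det, hmap]
  exact det_add_smul_add_transpose (hB.map φ) hunit _ (by decide) (by decide)

theorem prod_four_mul_sub_one {ι R : Type*} [CommRing R] (h16 : (16 : R) = 0) (s : Finset ι)
    (x : ι → R) : ∏ i ∈ s, (4 * x i - 1) = (-1) ^ s.card * (1 - 4 * ∑ i ∈ s, x i) := by
  classical
  induction s using Finset.induction with
  | empty => simp
  | insert c s hc ih =>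
    rw [Finset.prod_insert hc, Finset.sum_insert hc, ih, Finset.card_insert_of_notMem hc]
    linear_combination (-(-1 : R) ^ s.card * x c * ∑ i ∈ s, x i) * h16

def finPairEquiv (k : ℕ) : Fin 2 × Fin k ≃ Fin (2 * k) :=
  (Equiv.prodComm _ _).trans (finProdFinEquiv.trans (finCongr (mul_comm k 2)))

@[simp]
theorem finPairEquiv_val {k : ℕ} (p : Fin 2) (i : Fin k) :
    (finPairEquiv k (p, i) : ℕ) = p + 2 * i := by
  simp [finPairEquiv, finProdFinEquiv]

theorem Matrix.det_eq_prod_det_of_div_two_ne {R : Type*} [CommRing R] {k : ℕ}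
    (M : Matrix (Fin (2 * k)) (Fin (2 * k)) R)
    (hM : ∀ i j : Fin (2 * k), (i : ℕ) / 2 ≠ (j : ℕ) / 2 → M i j = 0) :
    M.det = ∏ i : Fin k,
      (of fun p q : Fin 2 => M (finPairEquiv k (p, i)) (finPairEquiv k (q, i))).det := by
  have hblock : M.submatrix (finPairEquiv k) (finPairEquiv k) =
      blockDiagonal fun i => of fun p q => M (finPairEquiv k (p, i)) (finPairEquiv k (q, i)) := by
    ext ⟨p, i⟩ ⟨q, j⟩
    simp only [blockDiagonal_apply, submatrix_apply]
    split_ifs with hij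
    · subst hij; rfl
    · refine hM _ _ ?_
      have := p.isLt; have := q.isLt; have := Fin.val_ne_of_ne hij
      simp only [finPairEquiv_val]
      omega
  rw [← det_submatrix_equiv_self (finPairEquiv k), hblock, det_blockDiagonal]

def blockSumMatrix {k : ℕ} (a b : Fin k → ℤ) : Matrix (Fin (2 * k)) (Fin (2 * k)) ℤ :=
  of fun i j =>
    if i = j then
      (if (i : ℕ) % 2 = 0 then 4 * a ⟨(i : ℕ) / 2, Nat.div_lt_of_lt_mul i.isLt⟩
       else 1 + 4 * b ⟨(i : ℕ) / 2, Nat.div_lt_of_lt_mul i.isLt⟩)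
    else if (i : ℕ) / 2 = (j : ℕ) / 2 then 1 else 0

section blockSumMatrix

variable {k : ℕ} (a b : Fin k → ℤ)

theorem blockSumMatrix_isSymm : (blockSumMatrix a b).IsSymm := by
  ext i j
  simp only [transpose_apply, blockSumMatrix, of_apply]
  by_cases hij : i = j
  · subst hij; rfl
  · simp only [hij, Ne.symm hij, if_false, eq_comm]

theorem blockSumMatrix_block (i : Fin k) :
    of (fun p q : Fin 2 =>
      blockSumMatrix a b (finPairEquiv k (p, i)) (finPairEquiv k (q, i))) =
      !![4 * a i, 1; 1, 1 + 4 * b i] := by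
  have hdiv : (1 + 2 * (i : ℕ)) / 2 = i := by omega
  ext p q
  fin_cases p <;> fin_cases q <;> simp [blockSumMatrix, Fin.ext_iff, hdiv]

theorem det_blockSumMatrix :
    (blockSumMatrix a b).det = ∏ i, (4 * a i * (1 + 4 * b i) - 1) := by
  rw [det_eq_prod_det_of_div_two_ne]
  · simp only [blockSumMatrix_block, det_fin_two_of, mul_one]
  · intro i j hij
    have hne : i ≠ j := fun h => hij (h ▸ rfl)
    simp [blockSumMatrix, hij, hne]

theorem odd_det_blockSumMatrix : Odd (blockSumMatrix a b).det := by
  rw [det_blockSumMatrix]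
  exact Finset.prod_induction _ Odd (fun _ _ => Odd.mul) odd_one
    fun i _ => ⟨2 * a i * (1 + 4 * b i) - 1, by ring⟩

theorem det_blockSumMatrix_modEq_eight :
    (blockSumMatrix a b).det ≡ (-1) ^ k * (1 - 4 * ∑ i, a i) [ZMOD 8] := by
  refine (ZMod.intCast_eq_intCast_iff _ _ 8).mp ?_
  have h16 : (16 : ZMod 8) = 0 := by decide
  rw [det_blockSumMatrix]
  push_cast
  calc ∏ i, (4 * (a i : ZMod 8) * (1 + 4 * b i) - 1) = ∏ i, (4 * (a i : ZMod 8) - 1) :=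
        Finset.prod_congr rfl fun i _ => by linear_combination (a i : ZMod 8) * b i * h16
    _ = (-1) ^ k * (1 - 4 * ∑ i, (a i : ZMod 8)) := by
        simpa using prod_four_mul_sub_one h16 Finset.univ fun i => (a i : ZMod 8)

end blockSumMatrix

theorem modEq_pm_one_or_pm_three_of_modEq (k : ℕ) {s Δ : ℤ}
    (h : Δ ≡ (-1) ^ k * (1 - 4 * s) [ZMOD 8]) :
    (Even s → (Δ ≡ 1 [ZMOD 8] ∨ Δ ≡ -1 [ZMOD 8])) ∧
    (Odd s → (Δ ≡ 3 [ZMOD 8] ∨ Δ ≡ -3 [ZMOD 8])) := by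
  rcases k.even_or_odd with hk | hk <;> rw [hk.neg_one_pow] at h <;>
    refine ⟨fun ⟨m, hm⟩ => ?_, fun ⟨m, hm⟩ => ?_⟩ <;> simp only [Int.ModEq] at * <;> omega

/-- If `Δ ≡ det A mod 8` with `A = B + 4C + 4Cᵀ` and `B` block diagonal with
blocks `[[4aᵢ,1],[1,1+4bᵢ]]`, then `Δ ≡ ±1 mod 8` if `∑ aᵢ` is even and
`Δ ≡ ±3 mod 8` if `∑ aᵢ` is odd. -/
theorem delta_mod_eight (k : ℕ) (a b : Fin k → ℤ) (Δ : ℤ)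
    (B C A : Matrix (Fin (2 * k)) (Fin (2 * k)) ℤ)
    (hB : ∀ i j : Fin (2 * k), B i j =
      if i = j then
        (if (i : ℕ) % 2 = 0 then 4 * a ⟨(i : ℕ) / 2, by have := i.isLt; omega⟩
         else 1 + 4 * b ⟨(i : ℕ) / 2, by have := i.isLt; omega⟩)
      else if (i : ℕ) / 2 = (j : ℕ) / 2 then 1 else 0)
    (hA : A = B + (4 : ℤ) • C + (4 : ℤ) • Cᵀ)
    (hΔ : Δ ≡ A.det [ZMOD 8]) :
    (Even (∑ i, a i) → (Δ ≡ 1 [ZMOD 8] ∨ Δ ≡ -1 [ZMOD 8])) ∧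
    (Odd (∑ i, a i) → (Δ ≡ 3 [ZMOD 8] ∨ Δ ≡ -3 [ZMOD 8])) := by
  subst hA
  obtain rfl : B = blockSumMatrix a b := Matrix.ext hB
  refine modEq_pm_one_or_pm_three_of_modEq k ?_
  calc Δ ≡ (blockSumMatrix a b + (4 : ℤ) • C + (4 : ℤ) • Cᵀ).det [ZMOD 8] := hΔ
    _ ≡ (blockSumMatrix a b).det [ZMOD 8] :=
      Int.det_add_four_smul_add_transpose_modEq_eight (blockSumMatrix_isSymm a b)
        (odd_det_blockSumMatrix a b) C
    _ ≡ (-1) ^ k * (1 - 4 * ∑ i, a i) [ZMOD 8] := det_blockSumMatrix_modEq_eight a b
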